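/- Let N ≥ 1, α ∈ (0,2), and r₀ = (N+2−α)/N. The Poisson kernel P(x,y) = c_{N,α} y^α/(|x|²+y²)^((N+α)/2) belongs to the weak Lebesgue space L^{r₀,∞}(ℝ^{N+1}_+, y^{1−α} dx dy), i.e. sup_{λ>0} λ^{r₀} · μ({P > λ}) < ∞, where μ = y^{1−α} dx dy. -/

import Mathlib

/-!
On the level set `{P > λ}` one has `λ y^(N+α) ≤ λ (|x|² + y²)^((N+α)/2) < c y^α`, so
`y < (c/λ)^(1/N)`, and likewise `|x|^(N+α) < (c/λ) y^α`. Integrating `y^(1-α)` over this region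
slice by slice gives `|B₁| (c/λ)^(N/(N+α)) ∫₀^((c/λ)^(1/N)) y^β dy` with
`β = 1 - α + αN/(N+α) > -1`, which is a constant times `λ^(-(N+2-α)/N)`.
-/

open MeasureTheory Real

/-- The Caffarelli–Silvestre Poisson kernel. -/
noncomputable def poissonKernelCS (N : ℕ) (α : ℝ)
    (x : EuclideanSpace ℝ (Fin N)) (y : ℝ) : ℝ :=
  (Real.Gamma (((N : ℝ) + α) / 2) / (Real.pi ^ ((N : ℝ) / 2) * Real.Gamma (α / 2))) *
    y ^ α / (‖x‖ ^ 2 + y ^ 2) ^ (((N : ℝ) + α) / 2)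

open Set Metric

namespace MeasureTheory

variable {α β : Type*} [MeasurableSpace α] [MeasurableSpace β] {μ : Measure α} {ν : Measure β}
  [SFinite μ] [SFinite ν]

theorem setLIntegral_prod_comp_snd {s : Set (α × β)} (hs : MeasurableSet s) {w : β → ENNReal}
    (hw : Measurable w) :
    ∫⁻ p in s, w p.2 ∂μ.prod ν = ∫⁻ y, w y * μ ((·, y) ⁻¹' s) ∂ν := by
  rw [← lintegral_indicator hs, lintegral_prod_symm _
    ((show Measurable fun p : α × β => w p.2 by fun_prop).indicator hs).aemeasurable]
  refine lintegral_congr fun y => ?_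
  rw [← lintegral_indicator_const (measurable_prodMk_right hs)]
  rfl

theorem setLIntegral_prod_ball_fiber [PseudoMetricSpace α] [OpensMeasurableSpace α] (x₀ : α)
    {I : Set β} (hI : MeasurableSet I) {R : β → ℝ} (hR : Measurable R) {w : β → ENNReal}
    (hw : Measurable w) :
    ∫⁻ p in {p : α × β | p.2 ∈ I ∧ p.1 ∈ ball x₀ (R p.2)}, w p.2 ∂μ.prod ν
      = ∫⁻ y in I, w y * μ (ball x₀ (R y)) ∂ν := by
  have hmeas : MeasurableSet {p : α × β | p.2 ∈ I ∧ p.1 ∈ ball x₀ (R p.2)} :=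
    (hI.preimage measurable_snd).inter
      (measurableSet_lt ((continuous_id.dist continuous_const).measurable.comp measurable_fst)
        (hR.comp measurable_snd))
  rw [setLIntegral_prod_comp_snd hmeas hw, ← lintegral_indicator hI]
  refine lintegral_congr fun y => ?_
  by_cases hy : y ∈ I
  · simp [hy, Set.preimage, ball]
  · simp [hy]

end MeasureTheory

theorem lintegral_Ioo_zero_rpow {β Y : ℝ} (hβ : -1 < β) (hY : 0 ≤ Y) :
    ∫⁻ y in Ioo 0 Y, ENNReal.ofReal (y ^ β) = ENNReal.ofReal (Y ^ (β + 1) / (β + 1)) := by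
  have hint : IntegrableOn (fun y : ℝ => y ^ β) (Ioc 0 Y) := by
    have h := intervalIntegral.intervalIntegrable_rpow' (a := 0) (b := Y) hβ
    rwa [intervalIntegrable_iff, uIoc_of_le hY] at h
  have hnn : 0 ≤ᵐ[volume.restrict (Ioc 0 Y)] fun y : ℝ => y ^ β :=
    (ae_restrict_iff' measurableSet_Ioc).2
      (Filter.Eventually.of_forall fun y hy => rpow_nonneg hy.1.le _)
  rw [Measure.restrict_congr_set Ioo_ae_eq_Ioc, ← ofReal_integral_eq_lintegral_ofReal hint hnn,
    ← intervalIntegral.integral_of_le hY, integral_rpow (Or.inl hβ),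
    zero_rpow (by linarith : β + 1 ≠ 0), sub_zero]

noncomputable def poissonConst (N : ℕ) (α : ℝ) : ℝ :=
  Gamma (((N : ℝ) + α) / 2) / (π ^ ((N : ℝ) / 2) * Gamma (α / 2))

theorem poissonConst_pos (N : ℕ) {α : ℝ} (hα : 0 < α) : 0 < poissonConst N α :=
  div_pos (Gamma_pos_of_pos (by positivity))
    (mul_pos (rpow_pos_of_pos pi_pos _) (Gamma_pos_of_pos (by positivity)))

theorem poissonKernelCS_eq (N : ℕ) (α : ℝ) (x : EuclideanSpace ℝ (Fin N)) (y : ℝ) :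
    poissonKernelCS N α x y
      = poissonConst N α * y ^ α / (‖x‖ ^ 2 + y ^ 2) ^ (((N : ℝ) + α) / 2) :=
  rfl

theorem rpow_lt_div_and_rpow_lt_div_mul_of_lt_div {a y c lam n α : ℝ} (ha : 0 ≤ a) (hy : 0 < y)
    (hlam : 0 < lam) (hnα : 0 ≤ n + α) (h : lam < c * y ^ α / (a ^ 2 + y ^ 2) ^ ((n + α) / 2)) :
    y ^ n < c / lam ∧ a ^ (n + α) < c / lam * y ^ α := by
  set D := (a ^ 2 + y ^ 2) ^ ((n + α) / 2)
  rw [lt_div_iff₀ (rpow_pos_of_pos (by positivity) _)] at h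
  have hsq : ∀ t : ℝ, 0 ≤ t → (t ^ 2) ^ ((n + α) / 2) = t ^ (n + α) := fun t ht => by
    rw [← rpow_natCast, ← rpow_mul ht]
    ring_nf
  have hyD : y ^ (n + α) ≤ D :=
    hsq y hy.le ▸ rpow_le_rpow (sq_nonneg y) (le_add_of_nonneg_left (sq_nonneg a)) (by positivity)
  have haD : a ^ (n + α) ≤ D :=
    hsq a ha ▸ rpow_le_rpow (sq_nonneg a) (le_add_of_nonneg_right (sq_nonneg y)) (by positivity)
  constructor
  · rw [lt_div_iff₀ hlam]
    refine lt_of_mul_lt_mul_right ?_ (rpow_nonneg hy.le α)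
    calc y ^ n * lam * y ^ α = lam * y ^ (n + α) := by rw [rpow_add hy]; ring
      _ ≤ lam * D := by gcongr
      _ < c * y ^ α := h
  · rw [div_mul_eq_mul_div, lt_div_iff₀ hlam]
    calc a ^ (n + α) * lam ≤ D * lam := by gcongr
      _ < c * y ^ α := by linarith

theorem setOf_lt_poissonKernelCS_subset {N : ℕ} (hN : 0 < N) {α : ℝ} (hNα : 0 < (N : ℝ) + α)
    {lam : ℝ} (hlam : 0 < lam) :
    {p : EuclideanSpace ℝ (Fin N) × ℝ | 0 < p.2 ∧ lam < poissonKernelCS N α p.1 p.2} ⊆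
      {p | p.2 ∈ Ioo 0 ((poissonConst N α / lam) ^ (N : ℝ)⁻¹) ∧
        p.1 ∈ ball 0 ((poissonConst N α / lam * p.2 ^ α) ^ ((N : ℝ) + α)⁻¹)} := by
  rintro ⟨x, y⟩ ⟨hy, hP⟩
  rw [poissonKernelCS_eq] at hP
  obtain ⟨hyN, hxN⟩ := rpow_lt_div_and_rpow_lt_div_mul_of_lt_div (norm_nonneg x) hy hlam hNα.le hP
  have hK : 0 ≤ poissonConst N α / lam := (rpow_nonneg hy.le _).trans hyN.le
  exact ⟨⟨hy, (lt_rpow_inv_iff_of_pos hy.le hK (by exact_mod_cast hN)).2 hyN⟩,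
    mem_ball_zero_iff.2 ((lt_rpow_inv_iff_of_pos (norm_nonneg x) (by positivity) hNα).2 hxN)⟩

theorem ofReal_rpow_mul_volume_ball {N : ℕ} {α K y : ℝ} (hK : 0 < K) (hy : 0 < y) :
    ENNReal.ofReal (y ^ (1 - α)) *
        volume (ball (0 : EuclideanSpace ℝ (Fin N)) ((K * y ^ α) ^ ((N : ℝ) + α)⁻¹))
      = ENNReal.ofReal (K ^ ((N : ℝ) / (N + α))) *
          volume (ball (0 : EuclideanSpace ℝ (Fin N)) 1) *
          ENNReal.ofReal (y ^ (1 - α + α * (N / (N + α)))) := by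
  have hKy : 0 < K * y ^ α := by positivity
  have hpow : ((K * y ^ α) ^ ((N : ℝ) + α)⁻¹) ^ N
      = K ^ ((N : ℝ) / (N + α)) * y ^ (α * (N / (N + α))) := by
    rw [← rpow_natCast, ← rpow_mul hKy.le, mul_rpow hK.le (rpow_nonneg hy.le _), ← rpow_mul hy.le,
      inv_mul_eq_div]
  rw [Measure.addHaar_ball_of_pos _ _ (rpow_pos_of_pos hKy _), finrank_euclideanSpace_fin, hpow,
    rpow_add hy, ENNReal.ofReal_mul (rpow_nonneg hy.le _), ENNReal.ofReal_mul (rpow_nonneg hK.le _)]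
  ring

theorem setLIntegral_lt_poissonKernelCS_le {N : ℕ} (hN : 0 < N) {α : ℝ} (hα : 0 < α)
    (hα2 : α < 2) {lam : ℝ} (hlam : 0 < lam) :
    ∫⁻ p in {p : EuclideanSpace ℝ (Fin N) × ℝ | 0 < p.2 ∧ lam < poissonKernelCS N α p.1 p.2},
        ENNReal.ofReal (p.2 ^ (1 - α))
      ≤ ENNReal.ofReal ((poissonConst N α / lam) ^ (((N : ℝ) + 2 - α) / N) /
            (1 - α + α * (N / (N + α)) + 1)) *
          volume (ball (0 : EuclideanSpace ℝ (Fin N)) 1) := by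
  have hNpos : (0 : ℝ) < N := by exact_mod_cast hN
  have hNα : 0 < (N : ℝ) + α := by positivity
  set K := poissonConst N α / lam
  have hK : 0 < K := div_pos (poissonConst_pos N hα) hlam
  set q := (N : ℝ) / (N + α)
  set β := 1 - α + α * q
  have hβ : -1 < β := by
    have : 0 < α * q := by positivity
    linarith
  set B := volume (ball (0 : EuclideanSpace ℝ (Fin N)) 1)
  have hexp : q + (β + 1) / N = ((N : ℝ) + 2 - α) / N := by
    simp only [β, q]
    field_simp
    ring
  calc _ ≤ ∫⁻ p in {p : EuclideanSpace ℝ (Fin N) × ℝ | p.2 ∈ Ioo 0 (K ^ (N : ℝ)⁻¹) ∧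
          p.1 ∈ ball 0 ((K * p.2 ^ α) ^ ((N : ℝ) + α)⁻¹)}, ENNReal.ofReal (p.2 ^ (1 - α)) :=
        lintegral_mono_set (setOf_lt_poissonKernelCS_subset hN hNα hlam)
    _ = ∫⁻ y in Ioo 0 (K ^ (N : ℝ)⁻¹), ENNReal.ofReal (y ^ (1 - α)) *
          volume (ball (0 : EuclideanSpace ℝ (Fin N)) ((K * y ^ α) ^ ((N : ℝ) + α)⁻¹)) := by
        rw [Measure.volume_eq_prod]
        exact setLIntegral_prod_ball_fiber 0 measurableSet_Ioo
          (by fun_prop : Measurable fun y : ℝ => (K * y ^ α) ^ ((N : ℝ) + α)⁻¹)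
          (by fun_prop : Measurable fun y : ℝ => ENNReal.ofReal (y ^ (1 - α)))
    _ = ∫⁻ y in Ioo 0 (K ^ (N : ℝ)⁻¹), ENNReal.ofReal (K ^ q) * B * ENNReal.ofReal (y ^ β) :=
        setLIntegral_congr_fun measurableSet_Ioo fun y hy => ofReal_rpow_mul_volume_ball hK hy.1
    _ = ENNReal.ofReal (K ^ q) * B * ENNReal.ofReal ((K ^ (N : ℝ)⁻¹) ^ (β + 1) / (β + 1)) := by
        rw [lintegral_const_mul _ (by fun_prop), lintegral_Ioo_zero_rpow hβ (by positivity)]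
    _ = ENNReal.ofReal (K ^ (((N : ℝ) + 2 - α) / N) / (β + 1)) * B := by
        rw [← rpow_mul hK.le, ← hexp, rpow_add hK, mul_right_comm,
          ← ENNReal.ofReal_mul (by positivity), mul_div_assoc, inv_mul_eq_div]

/-- `P ∈ L^{r₀,∞}(ℝ^{N+1}_+, y^{1-α} dx dy)` with `r₀ = (N+2-α)/N`. -/
theorem stmt4 (N : ℕ) (hN : 1 ≤ N) (α : ℝ) (hα : 0 < α) (hα2 : α < 2) :
    ∃ C : ℝ, 0 < C ∧ ∀ lam : ℝ, 0 < lam →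
      ENNReal.ofReal (lam ^ (((N : ℝ) + 2 - α) / N)) *
        (∫⁻ p in {p : EuclideanSpace ℝ (Fin N) × ℝ | 0 < p.2 ∧
            lam < poissonKernelCS N α p.1 p.2},
          ENNReal.ofReal (p.2 ^ (1 - α)))
      ≤ ENNReal.ofReal C := by
  set r₀ := ((N : ℝ) + 2 - α) / N
  set c := poissonConst N α
  have hc : 0 < c := poissonConst_pos N hα
  set β := 1 - α + α * ((N : ℝ) / (N + α))
  have hβ : 0 < β + 1 := by
    have : 0 < α * ((N : ℝ) / (N + α)) := by positivity
    linarith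
  set B := volume (ball (0 : EuclideanSpace ℝ (Fin N)) 1)
  have hB : 0 < B.toReal :=
    ENNReal.toReal_pos (measure_ball_pos _ _ one_pos).ne' measure_ball_lt_top.ne
  refine ⟨c ^ r₀ / (β + 1) * B.toReal, by positivity, fun lam hlam => ?_⟩
  calc _ ≤ ENNReal.ofReal (lam ^ r₀) * (ENNReal.ofReal ((c / lam) ^ r₀ / (β + 1)) * B) :=
        mul_le_mul_right (setLIntegral_lt_poissonKernelCS_le hN hα hα2 hlam) _
    _ = ENNReal.ofReal (c ^ r₀ / (β + 1) * B.toReal) := by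
        rw [← mul_assoc, ← ENNReal.ofReal_mul (by positivity), ← mul_div_assoc,
          ← mul_rpow hlam.le (div_pos hc hlam).le, mul_div_cancel₀ _ hlam.ne',
          ENNReal.ofReal_mul (by positivity), ENNReal.ofReal_toReal measure_ball_lt_top.ne]
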